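/- Let C be an arc in K² with at least two points whose endpoints z and w are pure. If Γ⁻¹(C) is an 8-path in ℤ², then Γ⁻¹(z) and Γ⁻¹(w) are the two 8-endpoints of Γ⁻¹(C). -/

import Mathlib

open TopologicalSpace

/-- Basic (minimal) neighborhoods generating the Khalimsky topology on ℤ. -/
def khN (n : ℤ) : Set ℤ := if Odd n then {n} else {n - 1, n, n + 1}

/-- The Khalimsky (digital) topology on the integers. -/
def khLine : TopologicalSpace ℤ := generateFrom (Set.range khN)

/-- The Khalimsky topology on the digital plane ℤ × ℤ (product topology). -/
def khPlane : TopologicalSpace (ℤ × ℤ) :=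
  @instTopologicalSpaceProd ℤ ℤ khLine khLine

/-- A point of the digital plane is pure if both coordinates have the same parity. -/
def IsPure (p : ℤ × ℤ) : Prop := p.1 % 2 = p.2 % 2

/-- A point of the digital plane is mixed if it is not pure. -/
def IsMixed (p : ℤ × ℤ) : Prop := ¬ IsPure p

/-- A closed (pure) point: both coordinates even. -/
def IsClosedPt (p : ℤ × ℤ) : Prop := Even p.1 ∧ Even p.2

/-- An open (pure) point: both coordinates odd. -/
def IsOpenPt (p : ℤ × ℤ) : Prop := Odd p.1 ∧ Odd p.2

/-- The minimal open neighborhood N(x) of a point in the digital plane. -/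
def minN (x : ℤ × ℤ) : Set (ℤ × ℤ) := ⋂₀ {U : Set (ℤ × ℤ) | khPlane.IsOpen U ∧ x ∈ U}

/-- The closure cl(x) of a singleton in the digital plane. -/
def clPt (x : ℤ × ℤ) : Set (ℤ × ℤ) := @closure (ℤ × ℤ) khPlane {x}

/-- The adjacency set A(x) of a point of the digital plane. -/
def AdjSet (x : ℤ × ℤ) : Set (ℤ × ℤ) :=
  {y | y ≠ x ∧ @IsConnected (ℤ × ℤ) khPlane {x, y}}

/-- An arc: a subset of the digital plane homeomorphic (in the subspace topology)
to a finite interval of the Khalimsky line. -/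
def IsArc (C : Set (ℤ × ℤ)) : Prop :=
  ∃ a b : ℤ,
    Nonempty (@Homeomorph (↥C) (↥(Set.Icc a b))
      (TopologicalSpace.induced Subtype.val khPlane)
      (TopologicalSpace.induced Subtype.val khLine))

/-- z is an endpoint of the arc C: it has exactly one adjacent point within C. -/
def IsEndpointOf (z : ℤ × ℤ) (C : Set (ℤ × ℤ)) : Prop :=
  z ∈ C ∧ (AdjSet z ∩ C).encard = 1

/-- A Jordan curve in the digital plane. -/
def IsJordanCurve (J : Set (ℤ × ℤ)) : Prop :=
  @IsConnected (ℤ × ℤ) khPlane J ∧ 4 ≤ J.encard ∧ ∀ x ∈ J, IsArc (J \ {x})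

/-- The slant embedding Γ(x,y) = (x+y, y−x) of the Rosenfeld plane into the digital plane. -/
def Γmap (p : ℤ × ℤ) : ℤ × ℤ := (p.1 + p.2, p.2 - p.1)

/-- The operator Γ* turning subsets of ℤ² into subsets of the digital plane. -/
def ΓStar (A : Set (ℤ × ℤ)) : Set (ℤ × ℤ) :=
  Γmap '' A ∪
    {x | IsMixed x ∧ (minN x ⊆ Γmap '' A ∪ {x} ∨ clPt x ⊆ Γmap '' A ∪ {x})}

/-- 8-adjacency in ℤ². -/
def Adj8 (p q : ℤ × ℤ) : Prop := p ≠ q ∧ |p.1 - q.1| ≤ 1 ∧ |p.2 - q.2| ≤ 1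

/-- 4-adjacency in ℤ². -/
def Adj4 (p q : ℤ × ℤ) : Prop := p ≠ q ∧ |p.1 - q.1| + |p.2 - q.2| = 1

/-- The 8-neighbours of x within C. -/
def nbrs8 (C : Set (ℤ × ℤ)) (x : ℤ × ℤ) : Set (ℤ × ℤ) := {y ∈ C | Adj8 x y}

/-- The 4-neighbours of x within C. -/
def nbrs4 (C : Set (ℤ × ℤ)) (x : ℤ × ℤ) : Set (ℤ × ℤ) := {y ∈ C | Adj4 x y}

/-- x is an 8-endpoint of C. -/
def Is8Endpoint (C : Set (ℤ × ℤ)) (x : ℤ × ℤ) : Prop :=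
  x ∈ C ∧ (nbrs8 C x).encard = 1

/-- x is a 4-endpoint of C. -/
def Is4Endpoint (C : Set (ℤ × ℤ)) (x : ℤ × ℤ) : Prop :=
  x ∈ C ∧ (nbrs4 C x).encard = 1

/-- An 8-path: a finite set with exactly two 8-endpoints, every other point
having exactly two 8-adjacent points in the set. -/
def Is8Path (C : Set (ℤ × ℤ)) : Prop :=
  C.Finite ∧ {x | Is8Endpoint C x}.encard = 2 ∧
    ∀ x ∈ C, ¬ Is8Endpoint C x → (nbrs8 C x).encard = 2

/-- A 4-path. -/
def Is4Path (C : Set (ℤ × ℤ)) : Prop :=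
  C.Finite ∧ {x | Is4Endpoint C x}.encard = 2 ∧
    ∀ x ∈ C, ¬ Is4Endpoint C x → (nbrs4 C x).encard = 2

/-- A closed 8-curve: every point has exactly two 8-adjacent points in the set. -/
def Is8ClosedCurve (C : Set (ℤ × ℤ)) : Prop :=
  C.Finite ∧ ∀ x ∈ C, (nbrs8 C x).encard = 2

/-- A closed 4-curve. -/
def Is4ClosedCurve (C : Set (ℤ × ℤ)) : Prop :=
  C.Finite ∧ ∀ x ∈ C, (nbrs4 C x).encard = 2

/-- 8-connectedness: there is no partition into two nonempty pieces that are
not 8-adjacent to each other. -/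
def Conn8 (S : Set (ℤ × ℤ)) : Prop :=
  ¬ ∃ A B : Set (ℤ × ℤ), A.Nonempty ∧ B.Nonempty ∧ A ∪ B = S ∧ A ∩ B = ∅ ∧
      ∀ a ∈ A, ∀ b ∈ B, ¬ Adj8 a b

/-- 4-connectedness. -/
def Conn4 (S : Set (ℤ × ℤ)) : Prop :=
  ¬ ∃ A B : Set (ℤ × ℤ), A.Nonempty ∧ B.Nonempty ∧ A ∪ B = S ∧ A ∩ B = ∅ ∧
      ∀ a ∈ A, ∀ b ∈ B, ¬ Adj4 a b

/-- T is a 4-component of S: a maximal 4-connected subset of S. -/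
def Is4CompOf (T S : Set (ℤ × ℤ)) : Prop :=
  T ⊆ S ∧ Conn4 T ∧ ∀ T' : Set (ℤ × ℤ), T ⊆ T' → T' ⊆ S → Conn4 T' → T' = T

/-- U is a connected component of S in the digital plane. -/
def IsCompOf (U S : Set (ℤ × ℤ)) : Prop :=
  ∃ x ∈ S, @connectedComponentIn (ℤ × ℤ) khPlane S x = U

/-- The set S_J of mixed points of Γ*(Γ⁻¹(J)) having exactly three adjacent points in J. -/
def SJ (J : Set (ℤ × ℤ)) : Set (ℤ × ℤ) :=
  {m | m ∈ ΓStar (Γmap ⁻¹' J) ∧ IsMixed m ∧ (AdjSet m ∩ J).encard = 3}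

/-!
Parametrize the arc by `F : [a, b] → C`, so that `F i` and `F j` are adjacent exactly when
`|i - j| = 1`; the endpoints of `C` are then `F a` and `F b`. The neighbours of a mixed point
are pure, so consecutive pure points of the arc are separated by at most one mixed point, and
in both cases they lie at ℓ¹-distance at most 2. Since `Γ` is a rotation by 45° scaled by `√2`,
this says precisely that their `Γ`-preimages are 8-adjacent. Hence for every pure point `F i` with
`a < i < b`, its preimage has two distinct 8-neighbours in `Γ⁻¹(C)`, one from each side, and
is not an 8-endpoint. So the two 8-endpoints of `Γ⁻¹(C)` lie in the two-point set `Γ⁻¹{z, w}`.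
-/

open Set Topology

theorem isConnected_pair_iff_specializes {X : Type*} [TopologicalSpace X] {x y : X} :
    IsConnected ({x, y} : Set X) ↔ x ⤳ y ∨ y ⤳ x := by
  refine ⟨fun h => ?_, ?_⟩
  · by_contra! hxy
    simp only [specializes_iff_forall_open, not_forall, exists_prop] at hxy
    obtain ⟨⟨U, hU, hyU, hxU⟩, V, hV, hxV, hyV⟩ := hxy
    obtain ⟨t, ht, htV, htU⟩ := h.isPreconnected V U hV hU
      (by rintro t (rfl | rfl) <;> simp [hxV, hyU]) ⟨x, by simp, hxV⟩ ⟨y, by simp, hyU⟩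
    rcases ht with rfl | rfl <;> contradiction
  · have of_specializes : ∀ {a b : X}, a ⤳ b → IsConnected ({a, b} : Set X) := fun h =>
      isConnected_singleton.subset_closure (singleton_subset_iff.2 (mem_insert _ _))
        (insert_subset (subset_closure rfl) (singleton_subset_iff.2 h.mem_closure))
    rintro (h | h)
    · exact of_specializes h
    · exact pair_comm x y ▸ of_specializes h

theorem mem_khN_iff {m n : ℤ} : n ∈ khN m ↔ n = m ∨ m % 2 = 0 ∧ (n = m - 1 ∨ n = m + 1) := by
  unfold khN
  split_ifs with h <;> rw [Int.odd_iff] at h <;>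
    simp only [mem_insert_iff, mem_singleton_iff] <;> omega

section Khalimsky

attribute [local instance] khLine

theorem khN_subset_of_isOpen {U : Set ℤ} (hU : IsOpen U) {n : ℤ} (hn : n ∈ U) : khN n ⊆ U := by
  induction hU generalizing n with
  | basic V hV =>
    obtain ⟨k, rfl⟩ := hV
    intro m hm
    rw [mem_khN_iff] at *
    omega
  | univ => exact subset_univ _
  | inter U V _ _ ihU ihV => exact subset_inter (ihU hn.1) (ihV hn.2)
  | sUnion S _ ih =>
    obtain ⟨V, hVS, hnV⟩ := hn
    exact (ih V hVS hnV).trans (subset_sUnion_of_mem hVS)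

theorem khLine_specializes_iff {m n : ℤ} : m ⤳ n ↔ m ∈ khN n := by
  rw [specializes_iff_forall_open]
  exact ⟨fun h => h _ (GenerateOpen.basic _ ⟨n, rfl⟩) (mem_khN_iff.2 (Or.inl rfl)),
    fun h U hU hn => khN_subset_of_isOpen hU hn h⟩

theorem khLine_specializes_or_specializes_iff {m n : ℤ} :
    m ⤳ n ∨ n ⤳ m ↔ |m - n| ≤ 1 := by
  rw [khLine_specializes_iff, khLine_specializes_iff, mem_khN_iff, mem_khN_iff, abs_le]
  omega

theorem mem_adjSet_iff_specializes {x y : ℤ × ℤ} :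
    y ∈ AdjSet x ↔ y ≠ x ∧ (x ⤳ y ∨ y ⤳ x) :=
  and_congr_right fun _ => isConnected_pair_iff_specializes

theorem mem_adjSet_iff_khN {x y : ℤ × ℤ} :
    y ∈ AdjSet x ↔
      y ≠ x ∧ (x.1 ∈ khN y.1 ∧ x.2 ∈ khN y.2 ∨ y.1 ∈ khN x.1 ∧ y.2 ∈ khN x.2) := by
  obtain ⟨x1, x2⟩ := x
  obtain ⟨y1, y2⟩ := y
  simp only [mem_adjSet_iff_specializes, specializes_prod, khLine_specializes_iff]

theorem abs_sub_le_one_of_mem_adjSet {x y : ℤ × ℤ} (h : y ∈ AdjSet x) :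
    |y.1 - x.1| ≤ 1 ∧ |y.2 - x.2| ≤ 1 := by
  rw [mem_adjSet_iff_khN, mem_khN_iff, mem_khN_iff, mem_khN_iff, mem_khN_iff] at h
  rw [abs_le, abs_le]
  omega

theorem IsMixed.isPure_of_mem_adjSet {x y : ℤ × ℤ} (hx : IsMixed x) (h : y ∈ AdjSet x) :
    IsPure y ∧ |y.1 - x.1| + |y.2 - x.2| = 1 := by
  rw [mem_adjSet_iff_khN, mem_khN_iff, mem_khN_iff, mem_khN_iff, mem_khN_iff, Ne,
    Prod.ext_iff] at h
  unfold IsMixed IsPure at *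
  grind

/-- What a homeomorphism `C ≃ₜ Icc a b` says about the points of `C` and their adjacency. -/
structure IsArcParam (C : Set (ℤ × ℤ)) (a b : ℤ) (F : ℤ → ℤ × ℤ) : Prop where
  image_eq : F '' Icc a b = C
  injOn : InjOn F (Icc a b)
  mem_adjSet_iff :
    ∀ ⦃i⦄, i ∈ Icc a b → ∀ ⦃j⦄, j ∈ Icc a b → (F j ∈ AdjSet (F i) ↔ |i - j| = 1)

theorem IsArc.exists_isArcParam {C : Set (ℤ × ℤ)} (h : IsArc C) :
    ∃ a b F, IsArcParam C a b F := by
  obtain ⟨a, b, ⟨e⟩⟩ := h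
  let e' : C ≃ₜ Icc a b := e
  let F : ℤ → ℤ × ℤ := fun i => if hi : i ∈ Icc a b then e'.symm ⟨i, hi⟩ else 0
  have hF : ∀ i (hi : i ∈ Icc a b), F i = e'.symm ⟨i, hi⟩ := fun i hi => dif_pos hi
  have hinj : InjOn F (Icc a b) := fun i hi j hj h => by
    rw [hF i hi, hF j hj] at h
    simpa using e'.symm.injective (Subtype.ext h)
  have hspec : ∀ ⦃i⦄ (hi : i ∈ Icc a b) ⦃j⦄ (hj : j ∈ Icc a b), F i ⤳ F j ↔ i ⤳ j := by
    intro i hi j hj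
    rw [hF i hi, hF j hj, IsInducing.subtypeVal.specializes_iff,
      e'.symm.isInducing.specializes_iff]
    exact IsInducing.subtypeVal.specializes_iff.symm
  refine ⟨a, b, F, ?_, hinj, fun i hi j hj => ?_⟩
  · ext x
    refine ⟨?_, fun hx => ⟨e' ⟨x, hx⟩, (e' ⟨x, hx⟩).2, ?_⟩⟩
    · rintro ⟨i, hi, rfl⟩
      exact hF i hi ▸ (e'.symm ⟨i, hi⟩).2
    · rw [hF _ (e' ⟨x, hx⟩).2]
      simp
  · rw [mem_adjSet_iff_specializes, hspec hi hj, hspec hj hi,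
      khLine_specializes_or_specializes_iff, hinj.ne_iff hj hi]
    grind

end Khalimsky

theorem IsPure.exists_Γmap_eq {u : ℤ × ℤ} (hu : IsPure u) : ∃ p, Γmap p = u := by
  refine ⟨((u.1 - u.2) / 2, (u.1 + u.2) / 2), ?_⟩
  unfold IsPure at hu
  ext <;> simp only [Γmap] <;> omega

theorem Γmap_injective : Function.Injective Γmap := by
  intro p q h
  simp only [Γmap, Prod.mk.injEq] at h
  ext <;> omega

theorem adj8_iff_Γmap {p q : ℤ × ℤ} :
    Adj8 p q ↔ p ≠ q ∧ |(Γmap p).1 - (Γmap q).1| + |(Γmap p).2 - (Γmap q).2| ≤ 2 := by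
  unfold Adj8 Γmap
  refine and_congr_right fun _ => ?_
  simp only
  grind

namespace IsArcParam

variable {C : Set (ℤ × ℤ)} {a b : ℤ} {F : ℤ → ℤ × ℤ}

theorem reverse (hF : IsArcParam C a b F) : IsArcParam C (-b) (-a) (fun i => F (-i)) := by
  have hneg : ∀ {i}, i ∈ Icc (-b) (-a) → -i ∈ Icc a b := fun hi =>
    ⟨by linarith [hi.2], by linarith [hi.1]⟩
  refine ⟨?_, fun i hi j hj h => neg_inj.1 (hF.injOn (hneg hi) (hneg hj) h), fun i hi j hj => ?_⟩
  · rw [← hF.image_eq, ← image_neg_Icc, image_image]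
    simp
  · rw [hF.mem_adjSet_iff (hneg hi) (hneg hj)]
    grind

theorem eq_or_eq_of_isEndpointOf (hF : IsArcParam C a b F) {v : ℤ × ℤ}
    (hv : IsEndpointOf v C) : v = F a ∨ v = F b := by
  obtain ⟨hvC, hone⟩ := hv
  obtain ⟨i, hi, rfl⟩ := hF.image_eq ▸ hvC
  by_contra! hab
  have hai : a < i := lt_of_le_of_ne hi.1 (by rintro rfl; exact hab.1 rfl)
  have hib : i < b := lt_of_le_of_ne hi.2 (by rintro rfl; exact hab.2 rfl)
  have hpred : i - 1 ∈ Icc a b := ⟨by omega, by omega⟩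
  have hsucc : i + 1 ∈ Icc a b := ⟨by omega, by omega⟩
  have hne : F (i - 1) ≠ F (i + 1) := (hF.injOn.ne_iff hpred hsucc).2 (by omega)
  have hsub : {F (i - 1), F (i + 1)} ⊆ AdjSet (F i) ∩ C := by
    rw [← hF.image_eq]
    rintro _ (rfl | rfl)
    · exact ⟨(hF.mem_adjSet_iff hi hpred).2 (by simp), mem_image_of_mem F hpred⟩
    · exact ⟨(hF.mem_adjSet_iff hi hsucc).2 (by simp), mem_image_of_mem F hsucc⟩
  have := encard_le_encard hsub
  rw [encard_pair hne, hone] at this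
  norm_num at this

theorem pair_eq_of_isEndpointOf (hF : IsArcParam C a b F) {z w : ℤ × ℤ} (hzw : z ≠ w)
    (hz : IsEndpointOf z C) (hw : IsEndpointOf w C) : ({z, w} : Set (ℤ × ℤ)) = {F a, F b} :=
  (toFinite _).eq_of_subset_of_encard_le'
    (insert_subset (hF.eq_or_eq_of_isEndpointOf hz)
      (singleton_subset_iff.2 (hF.eq_or_eq_of_isEndpointOf hw)))
    (by rw [encard_pair hzw]; exact (encard_insert_le _ _).trans (by simp; rfl))

theorem exists_adj8_forward (hF : IsArcParam C a b F) (hb : IsPure (F b)) {i : ℤ}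
    (hai : a ≤ i) (hib : i < b) {p : ℤ × ℤ} (hp : Γmap p = F i) :
    ∃ j, i < j ∧ j ≤ b ∧ ∃ q, Γmap q = F j ∧ Adj8 p q := by
  have hi : i ∈ Icc a b := ⟨hai, hib.le⟩
  have hsucc : i + 1 ∈ Icc a b := ⟨by omega, by omega⟩
  have h1 : F (i + 1) ∈ AdjSet (F i) := (hF.mem_adjSet_iff hi hsucc).2 (by simp)
  by_cases hpure : IsPure (F (i + 1))
  · obtain ⟨q, hq⟩ := hpure.exists_Γmap_eq
    refine ⟨i + 1, by omega, hsucc.2, q, hq, adj8_iff_Γmap.2 ⟨?_, ?_⟩⟩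
    · rintro rfl
      exact h1.1 (hq.symm.trans hp)
    · have := abs_sub_le_one_of_mem_adjSet h1
      rw [hp, hq]
      grind
  · have hib' : i + 1 < b := lt_of_le_of_ne hsucc.2 (by rintro h; exact hpure (h ▸ hb))
    have hsucc2 : i + 2 ∈ Icc a b := ⟨by omega, by omega⟩
    have h2 := (hF.mem_adjSet_iff hsucc hsucc2).2 (by simp)
    have h0 := (hF.mem_adjSet_iff hsucc hi).2 (by simp)
    obtain ⟨hpure2, hd2⟩ := IsMixed.isPure_of_mem_adjSet hpure h2
    obtain ⟨-, hd0⟩ := IsMixed.isPure_of_mem_adjSet hpure h0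
    obtain ⟨q, hq⟩ := hpure2.exists_Γmap_eq
    refine ⟨i + 2, by omega, hsucc2.2, q, hq, adj8_iff_Γmap.2 ⟨?_, ?_⟩⟩
    · rintro rfl
      exact absurd (hF.injOn hi hsucc2 (hp.symm.trans hq)) (by omega)
    · rw [hp, hq]
      grind

theorem exists_adj8_backward (hF : IsArcParam C a b F) (ha : IsPure (F a)) {i : ℤ}
    (hai : a < i) (hib : i ≤ b) {p : ℤ × ℤ} (hp : Γmap p = F i) :
    ∃ j, a ≤ j ∧ j < i ∧ ∃ q, Γmap q = F j ∧ Adj8 p q := by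
  obtain ⟨j, hij, hja, q, hq, hpq⟩ :=
    hF.reverse.exists_adj8_forward (by simpa) (neg_le_neg hib) (neg_lt_neg hai) (by simpa)
  exact ⟨-j, by omega, by omega, q, hq, hpq⟩

theorem two_le_encard_nbrs8 (hF : IsArcParam C a b F) (ha : IsPure (F a)) (hb : IsPure (F b))
    {i : ℤ} (hai : a < i) (hib : i < b) {p : ℤ × ℤ} (hp : Γmap p = F i) :
    2 ≤ (nbrs8 (Γmap ⁻¹' C) p).encard := by
  obtain ⟨j₁, hij₁, hj₁b, q₁, hq₁, hpq₁⟩ := hF.exists_adj8_forward hb hai.le hib hp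
  obtain ⟨j₂, haj₂, hj₂i, q₂, hq₂, hpq₂⟩ := hF.exists_adj8_backward ha hai hib.le hp
  have hne : q₁ ≠ q₂ := by
    rintro rfl
    exact absurd (hF.injOn ⟨by omega, hj₁b⟩ ⟨haj₂, by omega⟩ (hq₁.symm.trans hq₂)) (by omega)
  have hsub : {q₁, q₂} ⊆ nbrs8 (Γmap ⁻¹' C) p := by
    rw [← hF.image_eq]
    rintro _ (rfl | rfl)
    · exact ⟨⟨j₁, ⟨by omega, hj₁b⟩, hq₁.symm⟩, hpq₁⟩
    · exact ⟨⟨j₂, ⟨haj₂, by omega⟩, hq₂.symm⟩, hpq₂⟩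
  exact encard_pair hne ▸ encard_le_encard hsub

theorem setOf_is8Endpoint_subset (hF : IsArcParam C a b F) (ha : IsPure (F a))
    (hb : IsPure (F b)) : {p | Is8Endpoint (Γmap ⁻¹' C) p} ⊆ Γmap ⁻¹' {F a, F b} := by
  rintro p ⟨hpC, hone⟩
  by_contra hpab
  obtain ⟨i, hi, hFi⟩ := hF.image_eq ▸ hpC
  rw [mem_preimage, ← hFi] at hpab
  have hai : a < i := lt_of_le_of_ne hi.1 (by rintro rfl; simp at hpab)
  have hib : i < b := lt_of_le_of_ne hi.2 (by rintro rfl; simp at hpab)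
  have := hF.two_le_encard_nbrs8 ha hb hai hib hFi.symm
  rw [hone] at this
  norm_num at this

end IsArcParam

theorem endpoints_of_preimage_8path_general (C : Set (ℤ × ℤ)) (z w : ℤ × ℤ)
    (harc : IsArc C) (hzw : z ≠ w)
    (hz : IsEndpointOf z C) (hw : IsEndpointOf w C)
    (hzp : IsPure z) (hwp : IsPure w) (hpath : Is8Path (Γmap ⁻¹' C)) :
    ∀ p : ℤ × ℤ, Is8Endpoint (Γmap ⁻¹' C) p ↔ (Γmap p = z ∨ Γmap p = w) := by
  obtain ⟨a, b, F, hF⟩ := harc.exists_isArcParam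
  have hends := hF.pair_eq_of_isEndpointOf hzw hz hw
  have hpure : ∀ v ∈ ({F a, F b} : Set (ℤ × ℤ)), IsPure v := by
    rw [← hends]
    rintro v (rfl | rfl) <;> assumption
  have hsub := hends ▸ hF.setOf_is8Endpoint_subset (hpure _ (.inl rfl)) (hpure _ (.inr rfl))
  have hcard : (Γmap ⁻¹' {z, w}).encard = 2 := by
    rw [encard_preimage_of_injective_subset_range Γmap_injective, encard_pair hzw]
    rintro v (rfl | rfl)
    · exact hzp.exists_Γmap_eq
    · exact hwp.exists_Γmap_eq
  have hE := (finite_of_encard_eq_coe hcard).eq_of_subset_of_encard_le' hsub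
    (by rw [hcard, hpath.2.1])
  exact fun p => Set.ext_iff.1 hE p

/-- If C is an arc in the digital plane with at least two points whose endpoints z, w
are pure, and Γ⁻¹(C) is an 8-path, then Γ⁻¹(z) and Γ⁻¹(w) are the two 8-endpoints
of Γ⁻¹(C). -/
theorem endpoints_of_preimage_8path (C : Set (ℤ × ℤ)) (z w : ℤ × ℤ)
    (harc : IsArc C) (hcard : 2 ≤ C.encard) (hzw : z ≠ w)
    (hz : IsEndpointOf z C) (hw : IsEndpointOf w C)
    (hzp : IsPure z) (hwp : IsPure w) (hpath : Is8Path (Γmap ⁻¹' C)) :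
    ∀ p : ℤ × ℤ, Is8Endpoint (Γmap ⁻¹' C) p ↔ (Γmap p = z ∨ Γmap p = w) :=
  endpoints_of_preimage_8path_general C z w harc hzw hz hw hzp hwp hpath
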